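/- For every Until-free LTL-SN formula φ, the translation t(φ) is a propositional formula: t(φ) contains no occurrence of the operators X or U. -/
import Mathlib


open scoped Classical

/-- An LTL-SN model: a finite set of agents `A`, an irreflexive, serial and
symmetric neighborhood function `N`, a threshold `θ ∈ [0,1]` and an initial
behavior set `I`. -/
structure SNModel (A : Type*) [Fintype A] [DecidableEq A] where
  N : A → Finset A
  θ : ℝ
  I : Finset A
  irrefl : ∀ a, a ∉ N a
  serial : ∀ a, (N a).Nonempty
  symm : ∀ a c, c ∈ N a ↔ a ∈ N c
  θ_nonneg : 0 ≤ θ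
  θ_le_one : θ ≤ 1

variable {A : Type*} [Fintype A] [DecidableEq A]

/-- The update `B ∪ {a ∈ 𝒜 : |N(a) ∩ B| / |N(a)| > θ}`. -/
noncomputable def SNModel.upd (M : SNModel A) (B : Finset A) : Finset A :=
  B ∪ Finset.univ.filter (fun a => M.θ < ((M.N a ∩ B).card : ℝ) / ((M.N a).card : ℝ))

/-- The relation `B ≤ B'` of the model. -/
def SNModel.rel (M : SNModel A) (B B' : Finset A) : Prop := B' = M.upd B

/-- The (unique) path of the model: `b 0 = I` and `b i ≤ b (i+1)`. -/
noncomputable def SNModel.path (M : SNModel A) : ℕ → Finset A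
  | 0 => M.I
  | i + 1 => M.upd (M.path i)

/-- Formulas of LTL-SN: `⊤ | N_{ab} | β_a | ¬φ | φ∧φ | Xφ | φUφ`. -/
inductive Formula (A : Type*) : Type _
  | top : Formula A
  | nbr : A → A → Formula A
  | beta : A → Formula A
  | neg : Formula A → Formula A
  | and : Formula A → Formula A → Formula A
  | next : Formula A → Formula A
  | untl : Formula A → Formula A → Formula A
deriving DecidableEq

/-- Disjunction abbreviation `φ ∨ ψ := ¬(¬φ ∧ ¬ψ)`. -/
def Formula.orF (φ ψ : Formula A) : Formula A := .neg (.and (.neg φ) (.neg ψ))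

/-- Implication abbreviation `φ → ψ := ¬(φ ∧ ¬ψ)`. -/
def Formula.impF (φ ψ : Formula A) : Formula A := .neg (.and φ (.neg ψ))

/-- Biimplication abbreviation. -/
def Formula.iffF (φ ψ : Formula A) : Formula A := .and (φ.impF ψ) (ψ.impF φ)

/-- `F φ := ⊤ U φ`. -/
def Formula.ev (φ : Formula A) : Formula A := .untl .top φ

/-- `G φ := ¬ F ¬ φ`. -/
def Formula.glob (φ : Formula A) : Formula A := .neg (Formula.ev (.neg φ))

/-- Finite disjunction of a list of formulas. -/
def bigOr : List (Formula A) → Formula A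
  | [] => .neg .top
  | φ :: l => φ.orF (bigOr l)

/-- Finite conjunction of a list of formulas. -/
def bigAnd : List (Formula A) → Formula A
  | [] => .top
  | φ :: l => .and φ (bigAnd l)

/-- Satisfaction at a position of the unique path of the model. -/
def Sat (M : SNModel A) : ℕ → Formula A → Prop
  | _, Formula.top => True
  | _, Formula.nbr a c => c ∈ M.N a
  | i, Formula.beta a => a ∈ M.path i
  | i, Formula.neg φ => ¬ Sat M i φ
  | i, Formula.and φ ψ => Sat M i φ ∧ Sat M i ψ
  | i, Formula.next φ => Sat M (i + 1) φ
  | i, Formula.untl φ ψ => ∃ n : ℕ, Sat M (i + n) ψ ∧ ∀ j < n, Sat M (i + j) φ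

/-- The until-expansion steps: `u⁰(φUψ) = ψ`, `uⁿ⁺¹(φUψ) = φ ∧ X uⁿ(φUψ)`. -/
def uStep (φ ψ : Formula A) : ℕ → Formula A
  | 0 => ψ
  | n + 1 => .and φ (.next (uStep φ ψ n))

/-- The until expansion `EXP_U(φUψ) = ⋁_{0 ≤ n ≤ |𝒜|} uⁿ(φUψ)`. -/
def expU (φ ψ : Formula A) : Formula A :=
  bigOr (((List.range (Fintype.card A + 1))).map (uStep φ ψ))

/-- The majority abbreviation
`β_{N(a)>θ} := ⋁_{G ⊆ 𝒩 ⊆ 𝒜, |G|/|𝒩| > θ} (⋀_{c∈𝒩} N_{ac} ∧ ⋀_{c∉𝒩} ¬N_{ac} ∧ ⋀_{c∈G} β_c)`. -/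
noncomputable def majorityF (θ : ℝ) (a : A) : Formula A :=
  bigOr ((((Finset.univ : Finset (Finset A × Finset A)).filter
      (fun p => p.1 ⊆ p.2 ∧ θ < (p.1.card : ℝ) / (p.2.card : ℝ))).toList).map
    (fun p =>
      Formula.and (bigAnd (p.2.toList.map (fun c => Formula.nbr a c)))
        (Formula.and
          (bigAnd (((Finset.univ : Finset A) \ p.2).toList.map
            (fun c => Formula.neg (Formula.nbr a c))))
          (bigAnd (p.1.toList.map (fun c => Formula.beta c))))))

/-- Propositional evaluation: `⊤`, `¬`, `∧` are interpreted, all other formulas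
are treated as atoms evaluated by the valuation `v`. -/
def evalProp (v : Formula A → Prop) : Formula A → Prop
  | .top => True
  | .neg φ => ¬ evalProp v φ
  | .and φ ψ => evalProp v φ ∧ evalProp v ψ
  | φ => v φ

/-- A (substitution instance of a) classical propositional tautology. -/
def Tautology (φ : Formula A) : Prop := ∀ v : Formula A → Prop, evalProp v φ

/-- The LTL-SN proof system. -/
inductive Proof (θ : ℝ) : Formula A → Prop
  | taut {φ : Formula A} : Tautology φ → Proof θ φ
  | netIrrefl (a : A) : Proof θ (.neg (.nbr a a))
  | netSymm (a c : A) : Proof θ ((Formula.nbr a c).iffF (.nbr c a))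
  | netSerial (a : A) :
      Proof θ (bigOr (((Finset.univ : Finset A)).toList.map (fun c => Formula.nbr a c)))
  | redN (a c : A) : Proof θ ((Formula.next (.nbr a c)).iffF (.nbr a c))
  | redB (a : A) :
      Proof θ ((Formula.next (.beta a)).iffF ((Formula.beta a).orF (majorityF θ a)))
  | redU (φ ψ : Formula A) : Proof θ ((Formula.untl φ ψ).iffF (expU φ ψ))
  | a1 (φ ψ : Formula A) :
      Proof θ ((Formula.glob (φ.impF ψ)).impF ((Formula.glob φ).impF (Formula.glob ψ)))
  | a2 (φ : Formula A) : Proof θ ((Formula.neg (.next φ)).iffF (.next (.neg φ)))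
  | a3 (φ ψ : Formula A) :
      Proof θ ((Formula.next (φ.impF ψ)).impF ((Formula.next φ).impF (.next ψ)))
  | a4 (φ : Formula A) :
      Proof θ ((Formula.glob (φ.impF (.next φ))).impF (φ.impF (Formula.glob φ)))
  | a5 (φ ψ : Formula A) :
      Proof θ ((Formula.untl φ ψ).iffF (ψ.orF (.and φ (.next (.untl φ ψ)))))
  | a6 (φ ψ : Formula A) : Proof θ ((Formula.untl φ ψ).impF (Formula.ev ψ))
  | a7 (φ ψ₁ ψ₂ : Formula A) :
      Proof θ ((Formula.untl φ (ψ₁.orF ψ₂)).iffF ((Formula.untl φ ψ₁).orF (.untl φ ψ₂)))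
  | a8 (φ ψ : Formula A) :
      Proof θ ((Formula.next (.and φ ψ)).iffF (.and (.next φ) (.next ψ)))
  | mp {φ ψ : Formula A} : Proof θ (φ.impF ψ) → Proof θ φ → Proof θ ψ
  | necG {φ : Formula A} : Proof θ φ → Proof θ (Formula.glob φ)
  | necX {φ : Formula A} : Proof θ φ → Proof θ (.next φ)

/-- Substitution `[φ/ψ]χ` of `φ` for occurrences of the subformula `ψ` in `χ`. -/
def subst (φ ψ : Formula A) : Formula A → Formula A
  | .neg χ₁ => if Formula.neg χ₁ = ψ then φ else .neg (subst φ ψ χ₁)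
  | .and χ₁ χ₂ => if Formula.and χ₁ χ₂ = ψ then φ else .and (subst φ ψ χ₁) (subst φ ψ χ₂)
  | .next χ₁ => if Formula.next χ₁ = ψ then φ else .next (subst φ ψ χ₁)
  | .untl χ₁ χ₂ => if Formula.untl χ₁ χ₂ = ψ then φ else .untl (subst φ ψ χ₁) (subst φ ψ χ₂)
  | χ => if χ = ψ then φ else χ

/-- The until translation `t_u`; on until formulas
`t_u(φUψ) = t_u(EXP_U(φUψ)) = EXP_U(t_u(φ) U t_u(ψ))` (since `t_u` commutes with
`¬`, `∧` and `X`). -/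
def tu : Formula A → Formula A
  | .top => .top
  | .nbr a c => .nbr a c
  | .beta a => .beta a
  | .neg φ => .neg (tu φ)
  | .and φ ψ => .and (tu φ) (tu ψ)
  | .next φ => .next (tu φ)
  | .untl φ ψ => expU (tu φ) (tu ψ)

/-- A formula contains no occurrence of the until operator. -/
def untilFree : Formula A → Prop
  | .top => True
  | .nbr _ _ => True
  | .beta _ => True
  | .neg φ => untilFree φ
  | .and φ ψ => untilFree φ ∧ untilFree ψ
  | .next φ => untilFree φ
  | .untl _ _ => False

/-- A formula is propositional: no occurrence of `X` nor of `U`. -/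
def propositional : Formula A → Prop
  | .top => True
  | .nbr _ _ => True
  | .beta _ => True
  | .neg φ => propositional φ
  | .and φ ψ => propositional φ ∧ propositional ψ
  | .next _ => False
  | .untl _ _ => False

/-- The cost measure `c` (on until-free formulas). -/
def cost : Formula A → ℕ
  | .top => 1
  | .nbr _ _ => 1
  | .beta _ => 1
  | .neg φ => 1 + cost φ
  | .and φ ψ => 1 + max (cost φ) (cost ψ)
  | .next (.beta _) => 4 + 2 * Fintype.card A ^ 2
  | .next φ => 2 * cost φ
  | .untl φ ψ => 1 + max (cost φ) (cost ψ)

/-- The subformula relation. -/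
inductive Subf : Formula A → Formula A → Prop
  | refl (φ : Formula A) : Subf φ φ
  | neg {ψ φ : Formula A} : Subf ψ φ → Subf ψ (.neg φ)
  | andL {ψ φ₁ φ₂ : Formula A} : Subf ψ φ₁ → Subf ψ (.and φ₁ φ₂)
  | andR {ψ φ₁ φ₂ : Formula A} : Subf ψ φ₂ → Subf ψ (.and φ₁ φ₂)
  | next {ψ φ : Formula A} : Subf ψ φ → Subf ψ (.next φ)
  | untlL {ψ φ₁ φ₂ : Formula A} : Subf ψ φ₁ → Subf ψ (.untl φ₁ φ₂)
  | untlR {ψ φ₁ φ₂ : Formula A} : Subf ψ φ₂ → Subf ψ (.untl φ₁ φ₂)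

/-- `pushX θ φ` computes `t(Xφ)` for a propositional (`X`- and `U`-free) formula
`φ`: it replaces each `β_a` by `β_a ∨ β_{N(a)>θ}` and keeps `N_{ac}` unchanged,
following the reduction equations `t(XN_{ac}) = N_{ac}`, `t(Xβ_a) = t(β_a ∨ β_{N(a)>θ})`,
`t(X(φ∧ψ)) = t(Xφ ∧ Xψ)`, `t(X¬φ) = t(¬Xφ)`. -/
noncomputable def pushX (θ : ℝ) : Formula A → Formula A
  | .top => .top
  | .nbr a c => .nbr a c
  | .beta a => (Formula.beta a).orF (majorityF θ a)
  | .neg φ => .neg (pushX θ φ)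
  | .and φ ψ => .and (pushX θ φ) (pushX θ ψ)
  | .next φ => .next (pushX θ φ)
  | .untl φ ψ => .untl (pushX θ φ) (pushX θ ψ)

/-- The translation `t` of until-free formulas into propositional formulas, given
by `t(N_{ac}) = N_{ac}`, `t(β_a) = β_a`, `t(φ∧ψ) = t(φ)∧t(ψ)`, `t(¬φ) = ¬t(φ)`,
`t(XN_{ac}) = N_{ac}`, `t(Xβ_a) = t(β_a ∨ β_{N(a)>θ})`, `t(X(φ∧ψ)) = t(Xφ ∧ Xψ)`,
`t(X¬φ) = t(¬Xφ)` and `t(XXφ) = t(X t(Xφ))`; all `X` cases are computed by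
pushing `X` through the already translated (hence propositional) body. -/
noncomputable def tr (θ : ℝ) : Formula A → Formula A
  | .top => .top
  | .nbr a c => .nbr a c
  | .beta a => .beta a
  | .neg φ => .neg (tr θ φ)
  | .and φ ψ => .and (tr θ φ) (tr θ ψ)
  | .next φ => pushX θ (tr θ φ)
  | .untl φ ψ => .untl (tr θ φ) (tr θ ψ)

lemma propositional_orF {φ ψ : Formula A} (h1 : propositional φ) (h2 : propositional ψ) :
    propositional (φ.orF ψ) := ⟨h1, h2⟩

lemma propositional_bigOr {l : List (Formula A)} (h : ∀ φ ∈ l, propositional φ) :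
    propositional (bigOr l) := by
  induction l with
  | nil => trivial
  | cons φ l ih =>
    exact propositional_orF (h φ (by simp)) (ih fun ψ hψ => h ψ (by simp [hψ]))

lemma propositional_bigAnd {l : List (Formula A)} (h : ∀ φ ∈ l, propositional φ) :
    propositional (bigAnd l) := by
  induction l with
  | nil => trivial
  | cons φ l ih =>
    exact ⟨h φ (by simp), ih fun ψ hψ => h ψ (by simp [hψ])⟩

lemma propositional_majorityF (θ : ℝ) (a : A) : propositional (majorityF θ a) := by
  apply propositional_bigOr
  intro φ hφ
  simp only [majorityF, List.mem_map] at hφ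
  obtain ⟨p, -, rfl⟩ := hφ
  refine ⟨propositional_bigAnd ?_, propositional_bigAnd ?_, propositional_bigAnd ?_⟩ <;>
    · intro ψ hψ
      simp only [List.mem_map] at hψ
      obtain ⟨c, -, rfl⟩ := hψ
      trivial

lemma propositional_pushX (θ : ℝ) {φ : Formula A} (h : propositional φ) :
    propositional (pushX θ φ) := by
  induction φ with
  | top => trivial
  | nbr a c => trivial
  | beta a => exact propositional_orF trivial (propositional_majorityF θ a)
  | neg φ ih => exact ih h
  | and φ ψ ih1 ih2 => exact ⟨ih1 h.1, ih2 h.2⟩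
  | next φ ih => exact absurd h id
  | untl φ ψ ih1 ih2 => exact absurd h id

/-- the translation of an until-free formula is propositional:
it contains no occurrence of `X` nor of `U`. -/
theorem tr_propositional (θ : ℝ) (φ : Formula A) (hφ : untilFree φ) :
    propositional (tr θ φ) := by
  induction φ with
  | top => trivial
  | nbr a c => trivial
  | beta a => trivial
  | neg φ ih => exact ih hφ
  | and φ ψ ih1 ih2 => exact ⟨ih1 hφ.1, ih2 hφ.2⟩
  | next φ ih => exact propositional_pushX θ (ih hφ)
  | untl φ ψ ih1 ih2 => exact absurd hφ id
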